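/- arXiv:1701.07818 — 4 statements merged into one kernel-verified Lean document; each statement's English description precedes it below -/
import Mathlib

section
/- Define f(α,θ) = Λ(α+θ) − Λ(α−θ) + (2/3)Λ(θ) − (2/3)Λ(2θ) for real α, θ. Then for all real α, θ one has f(α,θ) ≥ −(8/3)·Λ(π/4), and equality f(α,θ) = −(8/3)·Λ(π/4) holds if and only if α ≡ 0 (mod π) and θ ≡ 3π/4 (mod π). -/
open Real

/-- The Lobachevsky function `Λ(x) = -∫₀ˣ log|2 sin t| dt`. -/
noncomputable def lob (x : ℝ) : ℝ := -∫ t in (0:ℝ)..x, Real.log |2 * Real.sin t|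

/-- `f(α,θ) = Λ(α+θ) − Λ(α−θ) + (2/3)Λ(θ) − (2/3)Λ(2θ)`. -/
noncomputable def lobf (α θ : ℝ) : ℝ :=
  lob (α + θ) - lob (α - θ) + (2/3) * lob θ - (2/3) * lob (2*θ)

/-!
`Λ` is odd and `π`-periodic with `Λ(2x) = 2Λ(x) + 2Λ(x + π/2)`, so
`f(α, θ) = G_θ(α) - (2/3)Λ(θ) - (4/3)Λ(θ + π/2)` with `G_u(x) = Λ(x + u) - Λ(x - u)`
(`lobDiff u x`). In `x`, `G_u` is even and `π`-periodic, and for `0 < u < π/2` strictly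
decreasing on `[0, π/2]`: its derivative `log |sin (x - u) / sin (x + u)|` has the sign of
`-sin 2x sin 2u`. Since `G_θ` only depends on `θ mod π`, minimising over `α` gives
`f(π/2, θ) = (2/3) m(θ)` if `θ mod π ≤ π/2` and `f(0, θ) = -(4/3) m(θ)` otherwise, the latter
attained only at `α ≡ 0`, where `m(θ) = G_{π/4}(θ + π/4)`. The same monotonicity shows
`|m| ≤ 2Λ(π/4)` with `m(θ) = 2Λ(π/4)` only for `θ ≡ 3π/4`, and `Λ(π/4) > 0`.
-/

open MeasureTheory intervalIntegral Set Function

theorem intervalIntegrable_log_abs_two_mul_sin (a b : ℝ) :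
    IntervalIntegrable (fun t => log |2 * sin t|) volume a b :=
  ((analyticOnNhd_const.mul analyticOnNhd_sin).meromorphicOn).intervalIntegrable_log_norm

theorem lob_sub_lob (a b : ℝ) : lob b - lob a = -∫ t in a..b, log |2 * sin t| := by
  rw [lob, lob, ← integral_add_adjacent_intervals (intervalIntegrable_log_abs_two_mul_sin 0 a)
    (intervalIntegrable_log_abs_two_mul_sin a b)]
  ring

theorem continuous_lob : Continuous lob :=
  (continuous_primitive intervalIntegrable_log_abs_two_mul_sin 0).neg

theorem hasDerivAt_lob {x : ℝ} (hx : sin x ≠ 0) : HasDerivAt lob (-log |2 * sin x|) x := by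
  have hcont : ContinuousAt (fun t => log |2 * sin t|) x :=
    (continuous_const.mul continuous_sin).abs.continuousAt.log (by simpa using hx)
  have hmeas : Measurable fun t => log |2 * sin t| := by fun_prop
  exact (integral_hasDerivAt_right (intervalIntegrable_log_abs_two_mul_sin 0 x)
    hmeas.stronglyMeasurable.stronglyMeasurableAtFilter hcont).neg

theorem lob_zero : lob 0 = 0 := by simp [lob]

theorem lob_neg (x : ℝ) : lob (-x) = -lob x := by
  have h := integral_comp_neg (a := 0) (b := x) fun t => log |2 * sin t|
  simp only [sin_neg, mul_neg, abs_neg, neg_zero] at h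
  rw [lob, lob, h, integral_symm]

theorem ae_sin_two_mul_ne_zero : ∀ᵐ t : ℝ, sin (2 * t) ≠ 0 := by
  rw [ae_iff]
  refine Set.Countable.measure_zero ?_ volume
  refine (countable_range fun n : ℤ => n * π / 2).mono fun t ht => ?_
  obtain ⟨n, hn⟩ := sin_eq_zero_iff.mp (not_not.mp ht)
  exact ⟨n, by linarith⟩

/-- The duplication formula before `Λ(π/2) = 0` is known; it gives `Λ(π) = 0` and with it
the periodicity of `Λ`. -/
theorem lob_two_mul' (x : ℝ) :
    lob (2 * x) = 2 * lob x + 2 * lob (x + π / 2) - 2 * lob (π / 2) := by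
  have hint := (intervalIntegrable_log_abs_two_mul_sin (π / 2) (x + π / 2)).comp_add_right (π / 2)
  rw [sub_self, add_sub_cancel_right] at hint
  -- `log |2 sin 2t| = log |2 sin t| + log |2 cos t|` fails where `sin 2t = 0`, as `log 0 = 0`
  have hsplit : ∫ t in (0:ℝ)..x, log |2 * sin (2 * t)| =
      (∫ t in (0:ℝ)..x, log |2 * sin t|) + ∫ t in (0:ℝ)..x, log |2 * sin (t + π / 2)| := by
    rw [← integral_add (intervalIntegrable_log_abs_two_mul_sin 0 x) hint]
    refine integral_congr_ae (ae_sin_two_mul_ne_zero.mono fun t ht _ => ?_)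
    rw [sin_two_mul] at ht
    rw [sin_add_pi_div_two, ← log_mul (by simpa using left_ne_zero_of_mul ht)
      (by simpa using right_ne_zero_of_mul ht), ← abs_mul, sin_two_mul]
    ring_nf
  have hscale := integral_comp_mul_left (a := 0) (b := x) (fun t => log |2 * sin t|)
    (two_ne_zero (α := ℝ))
  have hshift := integral_comp_add_right (a := 0) (b := x) (fun t => log |2 * sin t|) (π / 2)
  simp only [zero_add, mul_zero] at hscale hshift
  rw [hsplit, hshift, smul_eq_mul] at hscale
  have h := lob_sub_lob (π / 2) (x + π / 2)
  unfold lob at h ⊢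
  linarith

theorem lob_pi : lob π = 0 := by
  have h := lob_two_mul' (π / 2)
  rw [mul_div_cancel₀ π two_ne_zero, add_halves] at h
  linarith

theorem lob_periodic : Periodic lob π := fun x => by
  have hper : Periodic (fun t => log |2 * sin t|) π := fun t => by simp [sin_add_pi]
  have h := lob_sub_lob x (x + π)
  rw [hper.intervalIntegral_add_eq x 0, zero_add, ← lob_sub_lob, lob_pi, lob_zero] at h
  linarith

theorem lob_pi_div_two : lob (π / 2) = 0 := by
  have h := lob_periodic (-(π / 2))
  rw [lob_neg, neg_add_eq_sub, sub_half] at h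
  linarith

theorem lob_two_mul (x : ℝ) : lob (2 * x) = 2 * lob x + 2 * lob (x + π / 2) := by
  rw [lob_two_mul', lob_pi_div_two, mul_zero, sub_zero]

theorem strictAntiOn_Icc_of_hasDerivAt_neg_of_ne {f f' : ℝ → ℝ} {a b c : ℝ} (hc : c ∈ Icc a b)
    (hf : ContinuousOn f (Icc a b)) (hf' : ∀ x ∈ Ioo a b, x ≠ c → HasDerivAt f (f' x) x)
    (hneg : ∀ x ∈ Ioo a b, x ≠ c → f' x < 0) : StrictAntiOn f (Icc a b) := by
  have piece : ∀ {a' b'}, a ≤ a' → b' ≤ b → c ∉ Ioo a' b' → StrictAntiOn f (Icc a' b') := by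
    intro a' b' ha hb hc'
    have hsub : Ioo a' b' ⊆ Ioo a b := Ioo_subset_Ioo ha hb
    have hne : ∀ x ∈ Ioo a' b', x ≠ c := fun x hx h => hc' (h ▸ hx)
    refine strictAntiOn_of_hasDerivWithinAt_neg (f' := f') (convex_Icc a' b')
      (hf.mono (Icc_subset_Icc ha hb)) (fun x hx => ?_) (fun x hx => ?_) <;>
      rw [interior_Icc] at hx
    · exact (hf' x (hsub hx) (hne x hx)).hasDerivWithinAt
    · exact hneg x (hsub hx) (hne x hx)
  rw [← Icc_union_Icc_eq_Icc hc.1 hc.2]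
  exact (piece le_rfl hc.2 fun h => h.2.false).union (piece hc.1 le_rfl fun h => h.1.false)
    (isGreatest_Icc hc.1) (isLeast_Icc hc.2)

noncomputable def lobDiff (u x : ℝ) : ℝ := lob (x + u) - lob (x - u)

theorem lobDiff_periodic (u : ℝ) : Periodic (lobDiff u) π := fun x => by
  rw [lobDiff, lobDiff, add_right_comm, lob_periodic _, add_sub_right_comm, lob_periodic _]

theorem lobDiff_periodic_left : Periodic lobDiff π := fun u => funext fun x => by
  rw [lobDiff, lobDiff, ← add_assoc, lob_periodic _, sub_add_eq_sub_sub, ← lob_periodic (x - u - π),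
    sub_add_cancel]

theorem lobDiff_neg (u x : ℝ) : lobDiff u (-x) = lobDiff u x := by
  rw [lobDiff, lobDiff, show -x + u = -(x - u) by ring, show -x - u = -(x + u) by ring, lob_neg,
    lob_neg]
  ring

theorem lobDiff_pi_sub (u x : ℝ) : lobDiff (π - u) x = -lobDiff u x := by
  rw [lobDiff, lobDiff, ← add_sub_assoc, add_sub_right_comm, lob_periodic _,
    sub_sub_eq_add_sub, ← lob_periodic (x + u - π), sub_add_cancel]
  ring

theorem lobDiff_zero_right (u : ℝ) : lobDiff u 0 = 2 * lob u := by
  rw [lobDiff, zero_add, zero_sub, lob_neg]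
  ring

theorem lobDiff_pi_div_two_right (u : ℝ) : lobDiff u (π / 2) = 2 * lob (u + π / 2) := by
  rw [lobDiff, ← neg_neg (π / 2 - u), neg_sub, lob_neg, ← lob_periodic (u - π / 2),
    add_comm (π / 2)]
  ring_nf

theorem continuous_lobDiff (u : ℝ) : Continuous (lobDiff u) :=
  (continuous_lob.comp (by fun_prop)).sub (continuous_lob.comp (by fun_prop))

theorem hasDerivAt_lobDiff {u x : ℝ} (hadd : sin (x + u) ≠ 0) (hsub : sin (x - u) ≠ 0) :
    HasDerivAt (lobDiff u) (log |2 * sin (x - u)| - log |2 * sin (x + u)|) x :=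
  (((hasDerivAt_lob hadd).comp_add_const x u).sub
    ((hasDerivAt_lob hsub).comp_sub_const x u)).congr_deriv (by ring)

theorem sin_add_sq_sub_sin_sub_sq (x u : ℝ) :
    sin (x + u) ^ 2 - sin (x - u) ^ 2 = sin (2 * x) * sin (2 * u) := by
  rw [sin_add, sin_sub, sin_two_mul, sin_two_mul]
  ring

theorem lobDiff_strictAntiOn {u : ℝ} (hu : u ∈ Ioo 0 (π / 2)) :
    StrictAntiOn (lobDiff u) (Icc 0 (π / 2)) := by
  obtain ⟨hu0, huπ⟩ := hu
  have hsin : ∀ x ∈ Ioo 0 (π / 2), x ≠ u → sin (x + u) ≠ 0 ∧ sin (x - u) ≠ 0 := by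
    rintro x ⟨hx0, hxπ⟩ hxu
    refine ⟨(sin_pos_of_pos_of_lt_pi (by linarith) (by linarith)).ne', fun h => hxu ?_⟩
    exact sub_eq_zero.mp ((sin_eq_zero_iff_of_lt_of_lt (by linarith) (by linarith)).mp h)
  refine strictAntiOn_Icc_of_hasDerivAt_neg_of_ne ⟨hu0.le, huπ.le⟩
    (continuous_lobDiff u).continuousOn
    (fun x hx hxu => hasDerivAt_lobDiff (hsin x hx hxu).1 (hsin x hx hxu).2) fun x hx hxu => ?_
  obtain ⟨hadd, hsub⟩ := hsin x hx hxu
  have hsq : sin (x - u) ^ 2 < sin (x + u) ^ 2 := by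
    have := sin_add_sq_sub_sin_sub_sq x u
    have h2x := sin_pos_of_pos_of_lt_pi (by linarith [hx.1] : 0 < 2 * x) (by linarith [hx.2])
    have h2u := sin_pos_of_pos_of_lt_pi (by linarith : 0 < 2 * u) (by linarith)
    nlinarith [mul_pos h2x h2u]
  rw [sub_neg, abs_mul, abs_mul]
  exact log_lt_log (by positivity) (mul_lt_mul_of_pos_left (sq_lt_sq.mp hsq) (by norm_num))

theorem exists_int_abs_sub_mul_le {K : Type*} [Field K] [LinearOrder K] [IsStrictOrderedRing K]
    [FloorRing K] {p : K} (hp : 0 < p) (x : K) : ∃ k : ℤ, |x - k * p| ≤ p / 2 := by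
  refine ⟨round (x / p), ?_⟩
  rw [show x - round (x / p) * p = (x / p - round (x / p)) * p by field_simp, abs_mul,
    abs_of_pos hp, div_eq_mul_one_div p, mul_comm p]
  exact mul_le_mul_of_nonneg_right (abs_sub_round _) hp.le

theorem lobDiff_eq_abs_sub_int_mul (u x : ℝ) (k : ℤ) : lobDiff u x = lobDiff u |x - k * π| := by
  rcases abs_choice (x - k * π) with h | h <;> rw [h]
  · exact ((lobDiff_periodic u).sub_int_mul_eq k).symm
  · rw [lobDiff_neg]
    exact ((lobDiff_periodic u).sub_int_mul_eq k).symm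

theorem lobDiff_le_lobDiff_zero {u : ℝ} (hu : u ∈ Ioo 0 (π / 2)) (x : ℝ) :
    lobDiff u x ≤ lobDiff u 0 ∧ (lobDiff u x = lobDiff u 0 → ∃ k : ℤ, x = k * π) := by
  obtain ⟨k, hk⟩ := exists_int_abs_sub_mul_le pi_pos x
  have hmem : |x - k * π| ∈ Icc 0 (π / 2) := ⟨abs_nonneg _, hk⟩
  have hzero : (0 : ℝ) ∈ Icc 0 (π / 2) := ⟨le_rfl, by positivity⟩
  rw [lobDiff_eq_abs_sub_int_mul u x k]
  refine ⟨(lobDiff_strictAntiOn hu).antitoneOn hzero hmem hmem.1, fun h => ⟨k, ?_⟩⟩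
  have := (lobDiff_strictAntiOn hu).injOn hmem hzero h
  rw [abs_eq_zero, sub_eq_zero] at this
  exact this

theorem lobDiff_pi_div_two_le {u : ℝ} (hu : u ∈ Icc 0 (π / 2)) (x : ℝ) :
    lobDiff u (π / 2) ≤ lobDiff u x := by
  rcases hu.1.eq_or_lt with rfl | hu0
  · simp [lobDiff]
  rcases hu.2.eq_or_lt with rfl | huπ
  · have h : ∀ y, lobDiff (π / 2) y = 0 := fun y => by
      have := lobDiff_pi_sub (π / 2) y
      rw [sub_half] at this
      linarith
    rw [h, h]
  obtain ⟨k, hk⟩ := exists_int_abs_sub_mul_le pi_pos x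
  rw [lobDiff_eq_abs_sub_int_mul u x k]
  exact (lobDiff_strictAntiOn ⟨hu0, huπ⟩).antitoneOn ⟨abs_nonneg _, hk⟩
    ⟨by positivity, le_rfl⟩ hk

theorem lobDiff_pi_div_four_pi_div_two : lobDiff (π / 4) (π / 2) = -2 * lob (π / 4) := by
  rw [lobDiff_pi_div_two_right, show π / 4 + π / 2 = -(π / 4) + π by ring, lob_periodic _, lob_neg]
  ring

theorem lob_pi_div_four_pos : 0 < lob (π / 4) := by
  have h := (lobDiff_strictAntiOn (u := π / 4) ⟨by positivity, by linarith [pi_pos]⟩)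
    ⟨le_rfl, by positivity⟩ ⟨by positivity, le_rfl⟩ (by positivity)
  rw [lobDiff_zero_right, lobDiff_pi_div_four_pi_div_two] at h
  linarith

theorem lobf_sub_lobf (α α' θ : ℝ) : lobf α θ - lobf α' θ = lobDiff θ α - lobDiff θ α' := by
  unfold lobf lobDiff
  ring

theorem lobf_zero_left (θ : ℝ) : lobf 0 θ = -(4/3) * lobDiff (π / 4) (θ + π / 4) := by
  rw [lobf, lobDiff, lob_two_mul, zero_add, zero_sub, lob_neg, add_sub_cancel_right, add_assoc,
    ← add_div, ← two_mul, show 2 * π / 4 = π / 2 by ring]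
  ring

theorem lobf_pi_div_two_left (θ : ℝ) : lobf (π / 2) θ = (2/3) * lobDiff (π / 4) (θ + π / 4) := by
  have h := lobDiff_pi_div_two_right θ
  rw [lobDiff] at h
  rw [lobf, lobDiff, lob_two_mul, add_sub_cancel_right, add_assoc,
    ← add_div, ← two_mul, show 2 * π / 4 = π / 2 by ring]
  linarith

theorem lobf_int_mul_pi_three_pi_div_four_add (a b : ℤ) :
    lobf (a * π) (3 * π / 4 + b * π) = -(8/3) * lob (π / 4) := by
  have h := lobf_sub_lobf (a * π) 0 (3 * π / 4 + b * π)
  rw [(lobDiff_periodic _).int_mul_eq, sub_self, sub_eq_zero] at h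
  rw [h, lobf_zero_left, show 3 * π / 4 + b * π + π / 4 = ((b + 1 : ℤ) : ℝ) * π by push_cast; ring,
    (lobDiff_periodic _).int_mul_eq, lobDiff_zero_right]
  ring

theorem pi_div_four_mem_Ioo : π / 4 ∈ Ioo 0 (π / 2) := ⟨by positivity, by linarith [pi_pos]⟩

theorem lobf_gt_of_mem_Icc {θ u : ℝ} (hu : u ∈ Icc 0 (π / 2)) (hθu : lobDiff θ = lobDiff u)
    (α : ℝ) : -(8/3) * lob (π / 4) < lobf α θ := by
  have hα := lobDiff_pi_div_two_le hu α
  rw [← hθu, ← sub_nonneg, ← lobf_sub_lobf, lobf_pi_div_two_left] at hα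
  have hθ := lobDiff_pi_div_two_le (Ioo_subset_Icc_self pi_div_four_mem_Ioo) (θ + π / 4)
  rw [lobDiff_pi_div_four_pi_div_two] at hθ
  linarith [lob_pi_div_four_pos]

theorem lobf_ge_of_mem_Ioo {θ u : ℝ} (hu : u ∈ Ioo (π / 2) π) (hθu : lobDiff θ = lobDiff u)
    (α : ℝ) : -(8/3) * lob (π / 4) ≤ lobf α θ ∧ (lobf α θ = -(8/3) * lob (π / 4) →
      (∃ a : ℤ, α = a * π) ∧ ∃ b : ℤ, θ = 3 * π / 4 + b * π) := by
  have hπu : π - u ∈ Ioo 0 (π / 2) := ⟨by linarith [hu.2], by linarith [hu.1]⟩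
  obtain ⟨hα_le, hα_eq⟩ := lobDiff_le_lobDiff_zero hπu α
  obtain ⟨hθ_le, hθ_eq⟩ := lobDiff_le_lobDiff_zero pi_div_four_mem_Ioo (θ + π / 4)
  rw [lobDiff_pi_sub, lobDiff_pi_sub, ← hθu] at hα_le hα_eq
  rw [lobDiff_zero_right] at hθ_le hθ_eq
  have hsub := lobf_sub_lobf α 0 θ
  rw [lobf_zero_left] at hsub
  refine ⟨by linarith, fun h => ⟨hα_eq (by linarith), ?_⟩⟩
  obtain ⟨k, hk⟩ := hθ_eq (by linarith)
  exact ⟨k - 1, by push_cast; linarith⟩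

/-- The minimum of `f(α,θ)` is `−(8/3)Λ(π/4)`, attained exactly when
`α ≡ 0 (mod π)` and `θ ≡ 3π/4 (mod π)`. -/
theorem stmt1 (α θ : ℝ) :
    -(8/3) * lob (π/4) ≤ lobf α θ ∧
      (lobf α θ = -(8/3) * lob (π/4) ↔
        ((∃ a : ℤ, α = a * π) ∧ (∃ b : ℤ, θ = 3*π/4 + b * π))) := by
  have hrhs : (∃ a : ℤ, α = a * π) ∧ (∃ b : ℤ, θ = 3*π/4 + b * π) →
      lobf α θ = -(8/3) * lob (π/4) := by
    rintro ⟨⟨a, rfl⟩, ⟨b, rfl⟩⟩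
    exact lobf_int_mul_pi_three_pi_div_four_add a b
  obtain ⟨u, hu, hθu⟩ := lobDiff_periodic_left.exists_mem_Ico₀ pi_pos θ
  rcases le_or_gt u (π / 2) with hu2 | hu2
  · have hlt := lobf_gt_of_mem_Icc ⟨hu.1, hu2⟩ hθu α
    exact ⟨hlt.le, fun h => absurd h hlt.ne', hrhs⟩
  · obtain ⟨hle, hlhs⟩ := lobf_ge_of_mem_Ioo ⟨hu2, hu.2⟩ hθu α
    exact ⟨hle, hlhs, hrhs⟩
end

section
/- For every real θ, the Lobachevsky function satisfies the identity Λ(θ + π/2) = (1/2)·Λ(2θ) − Λ(θ). -/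
open Real

namespace LobAux

open MeasureTheory intervalIntegral

noncomputable def f (t : ℝ) : ℝ := Real.log |2 * Real.sin t|

lemma f_periodic : Function.Periodic f π := fun x => by
  simp [f, Real.sin_add_pi, mul_neg, abs_neg]

lemma f_pi_sub (x : ℝ) : f (π - x) = f x := by
  simp [f, Real.sin_pi_sub]

lemma abs_log_le {t : ℝ} (ht : 0 < t) :
    |Real.log t| ≤ 2 * (t ^ (-(1/2) : ℝ) + t ^ ((1/2) : ℝ)) := by
  have h1 : (0:ℝ) < t ^ (-(1/2) : ℝ) := Real.rpow_pos_of_pos ht _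
  have h2 : (0:ℝ) < t ^ ((1/2) : ℝ) := Real.rpow_pos_of_pos ht _
  rcases le_or_gt t 1 with h | h
  · have hlog : Real.log t ≤ 0 := Real.log_nonpos ht.le h
    rw [abs_of_nonpos hlog]
    have heq : Real.log (t ^ (-(1/2) : ℝ)) = -(1/2) * Real.log t := Real.log_rpow ht _
    have hle : Real.log (t ^ (-(1/2) : ℝ)) ≤ t ^ (-(1/2) : ℝ) :=
      (Real.log_le_sub_one_of_pos h1).trans (by linarith)
    nlinarith
  · have hlog : 0 ≤ Real.log t := Real.log_nonneg h.le
    rw [abs_of_nonneg hlog]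
    have heq : Real.log (t ^ ((1/2) : ℝ)) = (1/2) * Real.log t := Real.log_rpow ht _
    have hle : Real.log (t ^ ((1/2) : ℝ)) ≤ t ^ ((1/2) : ℝ) :=
      (Real.log_le_sub_one_of_pos h2).trans (by linarith)
    nlinarith

lemma f_meas : Measurable f :=
  Real.measurable_log.comp ((Real.measurable_sin.const_mul 2).abs)

lemma intA : IntervalIntegrable f volume 0 (π/2) := by
  have hpi : (0:ℝ) < π := Real.pi_pos
  set C : ℝ := Real.log 2 + |Real.log (4/π)| with hC
  have hg : IntervalIntegrable
      (fun t : ℝ => C + 2 * (t ^ (-(1/2) : ℝ) + t ^ ((1/2) : ℝ))) volume 0 (π/2) := by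
    apply IntervalIntegrable.add intervalIntegrable_const
    exact ((intervalIntegrable_rpow' (by norm_num)).add
      (intervalIntegrable_rpow' (by norm_num))).const_mul 2
  apply hg.mono_fun' (f_meas.aestronglyMeasurable)
  have h0 : (0:ℝ) ≤ π/2 := by linarith
  rw [Set.uIoc_of_le h0]
  filter_upwards [ae_restrict_mem measurableSet_Ioc] with t ht
  obtain ⟨ht0, ht1⟩ := ht
  have hsin : 2/π * t ≤ Real.sin t := Real.mul_le_sin ht0.le ht1
  have hlb : 4/π * t ≤ 2 * Real.sin t := by
    have h' : 2 * (2/π * t) ≤ 2 * Real.sin t := by linarith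
    have he : (4:ℝ)/π * t = 2 * (2/π * t) := by ring
    linarith
  have hlb0 : (0:ℝ) < 4/π * t := by positivity
  have habs : |2 * Real.sin t| = 2 * Real.sin t := abs_of_nonneg (by linarith)
  have hub : 2 * Real.sin t ≤ 2 := by
    have := Real.sin_le_one t
    linarith
  have hflb : Real.log (4/π * t) ≤ f t := by
    rw [f, habs]
    exact Real.log_le_log hlb0 hlb
  have hfub : f t ≤ Real.log 2 := by
    rw [f, habs]
    exact Real.log_le_log (by linarith) hub
  have hsplit : |Real.log (4/π * t)| ≤ |Real.log (4/π)| + |Real.log t| := by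
    rw [Real.log_mul (by positivity) (ne_of_gt ht0)]
    exact abs_add_le _ _
  have hlt : |Real.log t| ≤ 2 * (t ^ (-(1/2) : ℝ) + t ^ ((1/2) : ℝ)) := abs_log_le ht0
  have hlog2 : (0:ℝ) ≤ Real.log 2 := Real.log_nonneg one_le_two
  have hbound : |f t| ≤ C + 2 * (t ^ (-(1/2) : ℝ) + t ^ ((1/2) : ℝ)) := by
    rw [abs_le]
    have hneg : -(|Real.log (4/π)| + |Real.log t|) ≤ Real.log (4/π * t) :=
      neg_le_of_abs_le hsplit
    constructor
    · have : -|Real.log t| ≥ -(2 * (t ^ (-(1/2) : ℝ) + t ^ ((1/2) : ℝ))) := by linarith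
      rw [hC]
      have habsC : (0:ℝ) ≤ |Real.log (4/π)| := abs_nonneg _
      linarith
    · rw [hC]
      have habsC : (0:ℝ) ≤ |Real.log (4/π)| := abs_nonneg _
      have hpos : (0:ℝ) ≤ 2 * (t ^ (-(1/2) : ℝ) + t ^ ((1/2) : ℝ)) := by
        have h1 : (0:ℝ) < t ^ (-(1/2) : ℝ) := Real.rpow_pos_of_pos ht0 _
        have h2 : (0:ℝ) < t ^ ((1/2) : ℝ) := Real.rpow_pos_of_pos ht0 _
        linarith
      linarith
  simpa [Real.norm_eq_abs] using hbound

lemma intB : IntervalIntegrable f volume (π/2) π := by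
  have h := intA.comp_sub_left π
  have heq : (fun x => f (π - x)) = f := funext f_pi_sub
  rw [heq] at h
  have e1 : π - π/2 = π/2 := by ring
  have e2 : π - 0 = π := by ring
  rw [e1, e2] at h
  exact h.symm

lemma int0pi : IntervalIntegrable f volume 0 π := intA.trans intB

lemma int_add_pi {a b : ℝ} (h : IntervalIntegrable f volume a b) :
    IntervalIntegrable f volume (a + π) (b + π) := by
  have h2 := h.comp_sub_right π
  have heq : (fun x => f (x - π)) = f := funext fun x => f_periodic.sub_eq x
  rwa [heq] at h2

lemma int_sub_pi {a b : ℝ} (h : IntervalIntegrable f volume a b) :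
    IntervalIntegrable f volume (a - π) (b - π) := by
  have h2 := h.comp_add_right π
  have heq : (fun x => f (x + π)) = f := funext fun x => f_periodic x
  rwa [heq] at h2

lemma intQ : ∀ n : ℕ, IntervalIntegrable f volume ((n:ℝ) * π) ((n:ℝ) * π + π) := by
  intro n
  induction n with
  | zero => simpa using int0pi
  | succ n ih =>
    have h := int_add_pi ih
    have e1 : (((n+1 : ℕ)) : ℝ) * π = (n : ℝ) * π + π := by push_cast; ring
    rw [e1]
    exact h

lemma intR : ∀ n : ℕ, IntervalIntegrable f volume (-((n:ℝ) * π) - π) (-((n:ℝ) * π)) := by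
  intro n
  induction n with
  | zero => simpa using int_sub_pi int0pi
  | succ n ih =>
    have h := int_sub_pi ih
    have e1 : (((n+1 : ℕ)) : ℝ) * π = (n : ℝ) * π + π := by push_cast; ring
    rw [e1, show -((n:ℝ) * π + π) = -((n:ℝ) * π) - π from by ring]
    exact h

lemma int_nat (n : ℕ) : IntervalIntegrable f volume (-((n:ℝ) * π)) ((n:ℝ) * π) := by
  induction n with
  | zero => simp
  | succ n ih =>
    have e1 : (((n+1 : ℕ)) : ℝ) * π = (n : ℝ) * π + π := by push_cast; ring
    have e2 : -((((n+1 : ℕ)) : ℝ) * π) = -((n:ℝ) * π) - π := by push_cast; ring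
    rw [e1, show -((n:ℝ) * π + π) = -((n:ℝ) * π) - π from by ring]
    exact (intR n).trans (ih.trans (intQ n))

lemma int_all (a b : ℝ) : IntervalIntegrable f volume a b := by
  have hpi : (0:ℝ) < π := Real.pi_pos
  obtain ⟨n, hn⟩ := exists_nat_ge (max |a| |b| / π)
  have hmax : max |a| |b| ≤ n * π := (div_le_iff₀ hpi).mp hn
  have hmem : ∀ x : ℝ, |x| ≤ max |a| |b| → x ∈ Set.uIcc (-(n * π)) ((n:ℝ) * π) := by
    intro x hx
    have h1 : |x| ≤ n * π := hx.trans hmax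
    rw [Set.uIcc_of_le (by nlinarith [abs_nonneg x] : -((n:ℝ) * π) ≤ (n:ℝ) * π)]
    exact ⟨neg_le_of_abs_le h1, le_of_abs_le h1⟩
  exact (int_nat n).mono_set
    (Set.uIcc_subset_uIcc (hmem a (le_max_left _ _)) (hmem b (le_max_right _ _)))

lemma badset_null : volume {u : ℝ | Real.sin u = 0 ∨ Real.cos u = 0} = 0 := by
  apply Set.Countable.measure_zero
  have h1 : {u : ℝ | Real.sin u = 0}.Countable := by
    apply Set.Countable.mono _ (Set.countable_range (fun n : ℤ => (n : ℝ) * π))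
    intro x hx
    obtain ⟨n, hn⟩ := Real.sin_eq_zero_iff.mp hx
    exact ⟨n, hn⟩
  have h2 : {u : ℝ | Real.cos u = 0}.Countable := by
    apply Set.Countable.mono _ (Set.countable_range (fun n : ℤ => (2 * (n:ℝ) + 1) * π / 2))
    intro x hx
    obtain ⟨n, hn⟩ := Real.cos_eq_zero_iff.mp hx
    exact ⟨n, hn.symm⟩
  have : {u : ℝ | Real.sin u = 0 ∨ Real.cos u = 0} =
      {u : ℝ | Real.sin u = 0} ∪ {u : ℝ | Real.cos u = 0} := rfl
  rw [this]
  exact h1.union h2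

lemma key (θ : ℝ) :
    ∫ u in (0:ℝ)..θ, f (2 * u) =
      (∫ u in (0:ℝ)..θ, f u) + ∫ u in (0:ℝ)..θ, f (u + π/2) := by
  have hcong : ∫ u in (0:ℝ)..θ, f (2 * u)
      = ∫ u in (0:ℝ)..θ, (f u + f (u + π/2)) := by
    apply intervalIntegral.integral_congr_ae
    have hae : ∀ᵐ u : ℝ, ¬(Real.sin u = 0 ∨ Real.cos u = 0) := by
      rw [ae_iff]
      have hset : {a : ℝ | ¬¬(Real.sin a = 0 ∨ Real.cos a = 0)} =
          {u : ℝ | Real.sin u = 0 ∨ Real.cos u = 0} := by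
        ext u; simp only [Set.mem_setOf_eq, not_not]
      rw [hset]
      exact badset_null
    filter_upwards [hae] with u hu _
    push_neg at hu
    obtain ⟨hs, hc⟩ := hu
    have h2s : (|2 * Real.sin u| : ℝ) ≠ 0 := by
      simp [abs_eq_zero]; exact hs
    have h2c : (|2 * Real.cos u| : ℝ) ≠ 0 := by
      simp [abs_eq_zero]; exact hc
    have habs : |2 * Real.sin (2 * u)| = |2 * Real.sin u| * |2 * Real.cos u| := by
      rw [Real.sin_two_mul, ← abs_mul]
      congr 1
      ring
    rw [f, f, f, habs, Real.log_mul h2s h2c, Real.sin_add_pi_div_two]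
  rw [hcong]
  apply intervalIntegral.integral_add (int_all 0 θ)
  have h := (int_all (π/2) (θ + π/2)).comp_add_right (π/2)
  have e1 : π/2 - π/2 = (0:ℝ) := by ring
  have e2 : θ + π/2 - π/2 = θ := by ring
  rwa [e1, e2] at h

noncomputable def F (x : ℝ) : ℝ := ∫ t in (0:ℝ)..x, f t

lemma half (θ : ℝ) : (2:ℝ)⁻¹ * F (2 * θ) = F θ + (F (θ + π/2) - F (π/2)) := by
  have h1 : ∫ u in (0:ℝ)..θ, f (2 * u) = (2:ℝ)⁻¹ • ∫ x in (0:ℝ)..(2*θ), f x := by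
    have := intervalIntegral.integral_comp_mul_left f (a := 0) (b := θ)
      (c := 2) (by norm_num)
    simpa using this
  have h2 : ∫ u in (0:ℝ)..θ, f (u + π/2) = F (θ + π/2) - F (π/2) := by
    rw [intervalIntegral.integral_comp_add_right f (π/2)]
    have hadj := intervalIntegral.integral_add_adjacent_intervals
      (int_all 0 (π/2)) (int_all (π/2) (θ + π/2))
    simp only [F]
    rw [zero_add]
    linarith
  have h3 := key θ
  rw [h1, h2] at h3
  simp only [smul_eq_mul] at h3
  simp only [F] at h3 ⊢
  linarith [h3]

lemma Fpi2 : F (π/2) = 0 := by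
  have hsym : F π = 2 * F (π/2) := by
    have h := intervalIntegral.integral_comp_sub_left f π (a := (0:ℝ)) (b := π/2)
    have heq : ∫ x in (0:ℝ)..(π/2), f (π - x) = ∫ x in (0:ℝ)..(π/2), f x := by
      apply intervalIntegral.integral_congr
      intro x _
      exact f_pi_sub x
    rw [heq] at h
    have e1 : π - π/2 = π/2 := by ring
    have e2 : π - 0 = π := by ring
    rw [e1, e2] at h
    have hadj := intervalIntegral.integral_add_adjacent_intervals
      (int_all 0 (π/2)) (int_all (π/2) π)
    simp only [F]
    linarith
  have h := half (π/2)
  have e : 2 * (π/2) = π := by ring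
  have e' : π/2 + π/2 = π := by ring
  rw [e, e'] at h
  simp only [F] at h hsym ⊢
  linarith

theorem main (θ : ℝ) : lob (θ + π/2) = (1/2) * lob (2*θ) - lob θ := by
  have h := half θ
  have h2 := Fpi2
  simp only [lob, F, f] at *
  linarith

end LobAux

/-- The identity `Λ(θ + π/2) = (1/2)Λ(2θ) − Λ(θ)` for the Lobachevsky function. -/
theorem stmt13 (θ : ℝ) : lob (θ + π/2) = (1/2) * lob (2*θ) - lob θ := by
  exact LobAux.main θ
end

section
/- Let r ≥ 3 be an odd integer and A ∈ ℂ a primitive 2r-th root of unity. If (i,j,k) ∈ I_r³ is an admissible triple, then (i′,j′,k) is also an admissible triple, and |i′,j′,k| = |i,j,k|, where for an admissible triple |a,b,c| = (−1)^{(a+b+c)/2} · [ (a+b−c)/2 ]! · [ (b+c−a)/2 ]! · [ (c+a−b)/2 ]! / [ (a+b+c)/2 + 1 ]! (all quantum factorials appearing here are nonzero, so both sides are well-defined complex numbers). -/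
/-- The quantum integer `[n] = (A^{2n} − A^{−2n})/(A² − A^{−2})`. -/
noncomputable def qint (A : ℂ) (n : ℤ) : ℂ :=
  (A^(2*n) - A^(-(2*n))) / (A^(2:ℤ) - A^(-2:ℤ))

/-- The quantum factorial `[n]! = ∏_{k=1}^{n} [k]`, with `[0]! = 1`. -/
noncomputable def qfact (A : ℂ) (n : ℕ) : ℂ := ∏ k ∈ Finset.Icc 1 n, qint A k

/-- A triple `(i,j,k) ∈ I_r³` is admissible if `i+j ≥ k`, `j+k ≥ i`, `k+i ≥ j`,
`i+j+k` is even and `i+j+k ≤ 2(r−2)`. -/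
def triAdm (r i j k : ℕ) : Prop :=
  k ≤ i + j ∧ i ≤ j + k ∧ j ≤ k + i ∧ Even (i + j + k) ∧ i + j + k ≤ 2*(r-2)

/-- The trihedral coefficient of an admissible triple:
`|i,j,k| = (−1)^{(i+j+k)/2} [ (i+j−k)/2 ]! [ (j+k−i)/2 ]! [ (k+i−j)/2 ]! / [ (i+j+k)/2 + 1 ]!`. -/
noncomputable def trip (A : ℂ) (i j k : ℕ) : ℂ :=
  (-1:ℂ)^((i+j+k)/2) * qfact A ((i+j-k)/2) * qfact A ((j+k-i)/2) * qfact A ((k+i-j)/2)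
    / qfact A ((i+j+k)/2 + 1)

/-!
Put `m = r - 2` and `s = (i+j+k)/2`. Since `A^{2r} = 1`, `[r - n] = -[n]`, which gives the reflection
formula `[a]! [b]! = (-1)^a [r-1]!` whenever `a + b = r - 1`. The reflected triple has half-sum
`m - s + k`, and both sides of the identity share the factors `[s-i]! [s-j]!`; the remaining factors
`[m-s]! / [m-s+k+1]!` and `[s-k]! / [s+1]!` are matched by two applications of the reflection
formula. Oddness of `r` makes the signs agree and keeps `[1], …, [r-1]` nonzero.
-/

section QuantumIntegers

variable {A : ℂ} {r : ℕ}

theorem zpow_two_mul_sub_zpow_neg_ne_zero (hodd : Odd r) (hA : IsPrimitiveRoot A (2 * r))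
    {n : ℤ} (hn : ¬ (r : ℤ) ∣ n) : A ^ (2 * n) - A ^ (-(2 * n)) ≠ 0 := by
  have hA0 : A ≠ 0 := hA.ne_zero (by have := hodd.pos; omega)
  rw [sub_ne_zero]
  intro h
  have h4 : A ^ (2 * (2 * n)) = 1 := by
    rw [two_mul (2 * n), zpow_add₀ hA0]
    nth_rw 1 [h]
    rw [← zpow_add₀ hA0, neg_add_cancel, zpow_zero]
  have hdvd : (2 : ℤ) * r ∣ 2 * (2 * n) := by exact_mod_cast (hA.zpow_eq_one_iff_dvd _).mp h4
  have hcop : IsCoprime (r : ℤ) (2 : ℕ) :=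
    Nat.isCoprime_iff_coprime.mpr (Nat.coprime_two_right.mpr hodd)
  exact hn (hcop.dvd_of_dvd_mul_left (Int.dvd_of_mul_dvd_mul_left two_ne_zero hdvd))

theorem qint_ne_zero (hodd : Odd r) (hA : IsPrimitiveRoot A (2 * r)) {n : ℤ}
    (hn : ¬ (r : ℤ) ∣ n) : qint A n ≠ 0 := by
  have hr : ¬ (r : ℤ) ∣ 1 := fun h1 => hn (h1.trans (one_dvd n))
  exact div_ne_zero (zpow_two_mul_sub_zpow_neg_ne_zero hodd hA hn)
    (by simpa using zpow_two_mul_sub_zpow_neg_ne_zero hodd hA hr)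

theorem qfact_ne_zero (hodd : Odd r) (hA : IsPrimitiveRoot A (2 * r)) {n : ℕ} (hn : n < r) :
    qfact A n ≠ 0 := by
  refine Finset.prod_ne_zero_iff.mpr fun k hk => qint_ne_zero hodd hA fun hdvd => ?_
  obtain ⟨hk1, hkn⟩ := Finset.mem_Icc.mp hk
  have := Nat.le_of_dvd hk1 (Int.natCast_dvd_natCast.mp hdvd)
  omega

theorem qfact_succ (n : ℕ) : qfact A (n + 1) = qfact A n * qint A (n + 1) := by
  rw [qfact, qfact, Finset.prod_Icc_succ_top (by omega)]
  norm_cast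

theorem qint_sub_eq_neg (hr : r ≠ 0) (hA : A ^ (2 * r) = 1) (n : ℤ) :
    qint A (r - n) = -qint A n := by
  have hA0 : A ≠ 0 := by rintro rfl; simp [hr] at hA
  have h2r : A ^ (2 * (r : ℤ)) = 1 := by exact_mod_cast hA
  have hpos : A ^ (2 * ((r : ℤ) - n)) = A ^ (-(2 * n)) := by
    rw [mul_sub, sub_eq_add_neg, zpow_add₀ hA0, h2r, one_mul]
  have hneg : A ^ (-(2 * ((r : ℤ) - n))) = A ^ (2 * n) := by
    rw [show -(2 * ((r : ℤ) - n)) = -(2 * r) + 2 * n by ring, zpow_add₀ hA0, zpow_neg, h2r,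
      inv_one, one_mul]
  rw [qint, qint, hpos, hneg, ← neg_div, neg_sub]

theorem qfact_mul_qfact_of_add_eq (hA : A ^ (2 * r) = 1) {a b : ℕ} (hab : a + b + 1 = r) :
    qfact A a * qfact A b = (-1) ^ a * qfact A (r - 1) := by
  induction a generalizing b with
  | zero => simp [qfact, show b = r - 1 by omega]
  | succ a ih =>
    have hflip : qint A ((b : ℤ) + 1) = -qint A ((a : ℤ) + 1) := by
      rw [show (b : ℤ) + 1 = r - ((a : ℤ) + 1) by omega, qint_sub_eq_neg (by omega) hA]
    have := ih (b := b + 1) (by omega)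
    rw [qfact_succ, hflip] at this
    rw [qfact_succ, pow_succ]
    linear_combination -this

end QuantumIntegers

theorem trip_eq_of_add_eq (A : ℂ) {i j k s : ℕ} (hs : i + j + k = 2 * s) (hk : k ≤ i + j)
    (hi : i ≤ j + k) (hj : j ≤ k + i) :
    trip A i j k = (-1) ^ s * qfact A (s - k) * qfact A (s - i) * qfact A (s - j)
      / qfact A (s + 1) := by
  rw [trip, show (i + j + k) / 2 = s by omega, show (i + j - k) / 2 = s - k by omega,
    show (j + k - i) / 2 = s - i by omega, show (k + i - j) / 2 = s - j by omega]

theorem triAdm_sub_sub {r i j k : ℕ} (h : triAdm r i j k) : triAdm r (r - 2 - i) (r - 2 - j) k := by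
  obtain ⟨h1, h2, h3, ⟨s, hs⟩, h5⟩ := h
  exact ⟨by omega, by omega, by omega, ⟨r - 2 - s + k, by omega⟩, by omega⟩

theorem stmt15_general (r : ℕ) (hodd : Odd r) (hr : 3 ≤ r) (A : ℂ)
    (hA : IsPrimitiveRoot A (2*r)) (i j k : ℕ)
    (h : triAdm r i j k) :
    triAdm r (r-2-i) (r-2-j) k ∧ trip A (r-2-i) (r-2-j) k = trip A i j k := by
  refine ⟨triAdm_sub_sub h, ?_⟩
  obtain ⟨h1, h2, h3, ⟨s, hs⟩, h5⟩ := h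
  rw [trip_eq_of_add_eq A (s := r - 2 - s + k) (by omega) (by omega) (by omega) (by omega),
    trip_eq_of_add_eq A (s := s) (by omega) h1 h2 h3, show r - 2 - s + k - k = r - 2 - s by omega,
    show r - 2 - s + k - (r - 2 - i) = s - j by omega,
    show r - 2 - s + k - (r - 2 - j) = s - i by omega,
    div_eq_div_iff (qfact_ne_zero hodd hA (by omega)) (qfact_ne_zero hodd hA (by omega))]
  have hrefl₁ := qfact_mul_qfact_of_add_eq hA.pow_eq_one (a := s + 1) (b := r - 2 - s) (by omega)
  have hrefl₂ :=
    qfact_mul_qfact_of_add_eq hA.pow_eq_one (a := s - k) (b := r - 2 - s + k + 1) (by omega)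
  have hsign : (-1 : ℂ) ^ (r - 2 - s + k) * (-1) ^ (s + 1) = (-1) ^ s * (-1) ^ (s - k) := by
    obtain ⟨t, rfl⟩ := hodd
    rw [← pow_add, ← pow_add, show 2 * t + 1 - 2 - s + k + (s + 1) = k + 2 * t by omega,
      show s + (s - k) = k + 2 * (s - k) by omega, pow_add, pow_add _ k, pow_mul, pow_mul,
      neg_one_sq, one_pow, one_pow]
  linear_combination (-1) ^ (r - 2 - s + k) * qfact A (s - i) * qfact A (s - j) * hrefl₁
    - (-1) ^ s * qfact A (s - i) * qfact A (s - j) * hrefl₂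
    + qfact A (s - i) * qfact A (s - j) * qfact A (r - 1) * hsign

/-- For `r ≥ 3` odd and `A` a primitive `2r`-th root of unity: if `(i,j,k) ∈ I_r³` is
admissible then so is `(i′,j′,k)`, where `i′ = r−2−i`, and `|i′,j′,k| = |i,j,k|`. -/
theorem stmt15 (r : ℕ) (hodd : Odd r) (hr : 3 ≤ r) (A : ℂ)
    (hA : IsPrimitiveRoot A (2*r)) (i j k : ℕ)
    (hi : i ≤ r - 2) (hj : j ≤ r - 2) (hk : k ≤ r - 2)
    (h : triAdm r i j k) :
    triAdm r (r-2-i) (r-2-j) k ∧ trip A (r-2-i) (r-2-j) k = trip A i j k :=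
  stmt15_general r hodd hr A hA i j k h
end

section
/- Let p, q ≥ 1 be integers and let i ≥ 1 be an odd integer. In the ring ℤ[t, t^{−1}] of Laurent polynomials, the element F_i(t) = Σ_{k=−(i−1)/2}^{(i−1)/2} ( t^{4pqk² − 4(p+q)k + 2} − t^{4pqk² − 4(p−q)k − 2} ) is divisible by t² − t^{−2}, and the quotient P_i(t) = F_i(t)/(t² − t^{−2}) satisfies ‖P_i‖₁ ≤ i·(2qi + 1). (By Morton's formula, up to multiplication by the monomial t^{pq(1−i²)}, the Laurent polynomial P_i is the i-th colored Jones polynomial of the (p,q)-torus knot, so the L¹-norms of the colored Jones polynomials of torus knots grow at most quadratically in the color.) -/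
open LaurentPolynomial

/-- The `L¹`-norm `‖P‖₁ = Σ_d |a_d|` of a Laurent polynomial `P = Σ_d a_d t^d`. -/
def l1norm (P : LaurentPolynomial ℤ) : ℤ := P.coeff.sum fun _ a => |a|

/-- `F_i(t) = Σ_{k=−(i−1)/2}^{(i−1)/2} (t^{4pqk²−4(p+q)k+2} − t^{4pqk²−4(p−q)k−2})`,
the numerator in Morton's formula for the `i`-th colored Jones polynomial of the
`(p,q)`-torus knot. -/
noncomputable def mortonF (p q i : ℕ) : LaurentPolynomial ℤ :=
  ∑ k ∈ Finset.Icc (-(((i-1)/2 : ℕ) : ℤ)) (((i-1)/2 : ℕ) : ℤ),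
    (T (4*p*q*k^2 - 4*((p:ℤ)+q)*k + 2) - T (4*p*q*k^2 - 4*((p:ℤ)-q)*k - 2))

/-!
Each summand of `F_i` has the form `t^{b+4m} − t^b` with `m = 1 − 2qk`, and by telescoping
`t^{b+4m} − t^b = (t² − t^{−2}) · Σ_{j<m} t^{b+4j+2}` (for `m ≥ 0`; symmetrically for `m < 0`).
So `P_i` is a sum over the `i` values of `k` of sums of `|m| ≤ 2q·|k| + 1`
monomials, and the triangle inequality for `‖·‖₁` gives `‖P_i‖₁ ≤ i(2qi + 1)`.
-/

open Finset

lemma l1norm_T (n : ℤ) : l1norm (T n) = 1 := by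
  unfold l1norm T
  rw [AddMonoidAlgebra.coeff_single, Finsupp.sum_single_index] <;> simp

lemma l1norm_neg (P : LaurentPolynomial ℤ) : l1norm (-P) = l1norm P := by
  classical
  simp only [l1norm, AddMonoidAlgebra.coeff_neg, Finsupp.sum, Finsupp.support_neg,
    Finsupp.neg_apply, abs_neg]

lemma l1norm_add_le (A B : LaurentPolynomial ℤ) :
    l1norm (A + B) ≤ l1norm A + l1norm B := by
  classical
  set s := A.coeff.support ∪ B.coeff.support
  have hA : l1norm A = ∑ d ∈ s, |A.coeff d| :=
    Finsupp.sum_of_support_subset _ subset_union_left _ fun _ _ => abs_zero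
  have hB : l1norm B = ∑ d ∈ s, |B.coeff d| :=
    Finsupp.sum_of_support_subset _ subset_union_right _ fun _ _ => abs_zero
  have hAB : l1norm (A + B) = ∑ d ∈ s, |A.coeff d + B.coeff d| :=
    Finsupp.sum_of_support_subset _ Finsupp.support_add _ fun _ _ => abs_zero
  rw [hA, hB, hAB, ← sum_add_distrib]
  exact sum_le_sum fun d _ => abs_add_le _ _

lemma l1norm_sum_le {α : Type*} (s : Finset α) (f : α → LaurentPolynomial ℤ) :
    l1norm (∑ x ∈ s, f x) ≤ ∑ x ∈ s, l1norm (f x) := by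
  classical
  induction s using Finset.induction_on with
  | empty => simp [l1norm]
  | insert x s hx ih =>
    rw [sum_insert hx, sum_insert hx]
    exact (l1norm_add_le _ _).trans (by linarith)

lemma l1norm_sum_T_le {α : Type*} (s : Finset α) (c : α → ℤ) :
    l1norm (∑ x ∈ s, T (c x)) ≤ #s :=
  (l1norm_sum_le s _).trans (by simp [l1norm_T])

lemma mul_sum_T_eq_T_sub_T {R : Type*} [CommRing R] (b : ℤ) (n : ℕ) :
    ((T 2 - T (-2)) * ∑ j ∈ range n, T (b + 4 * j + 2) : R[T;T⁻¹]) = T (b + 4 * n) - T b := by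
  induction n with
  | zero => simp
  | succ n ih =>
    rw [sum_range_succ, mul_add, ih, sub_mul, ← T_add, ← T_add]
    push_cast
    ring_nf

lemma exists_T_sub_T_eq_mul (b m : ℤ) :
    ∃ Q, T (b + 4 * m) - T b = (T 2 - T (-2)) * Q ∧ l1norm Q ≤ |m| := by
  obtain ⟨n, rfl | rfl⟩ := Int.eq_nat_or_neg m
  · refine ⟨_, (mul_sum_T_eq_T_sub_T b n).symm, ?_⟩
    simpa using l1norm_sum_T_le (range n) fun j : ℕ => b + 4 * j + 2
  · refine ⟨-∑ j ∈ range n, T (b - 4 * n + 4 * j + 2), ?_, ?_⟩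
    · rw [mul_neg (T 2 - T (-2)), mul_sum_T_eq_T_sub_T, sub_add_cancel, neg_sub, mul_neg, ← sub_eq_add_neg]
    · simpa [l1norm_neg] using l1norm_sum_T_le (range n) fun j : ℕ => b - 4 * n + 4 * j + 2

theorem stmt18_general (p q i : ℕ) (hodd : Odd i) :
    ∃ P : LaurentPolynomial ℤ,
      mortonF p q i = (T 2 - T (-2)) * P ∧ l1norm P ≤ i * (2*q*i + 1) := by
  obtain ⟨n, rfl⟩ := hodd
  have hn : (2 * n + 1 - 1) / 2 = n := by omega
  choose Q hQ hQnorm using fun k : ℤ =>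
    exists_T_sub_T_eq_mul (4*p*q*k^2 - 4*((p:ℤ)-q)*k - 2) (1 - 2*q*k)
  refine ⟨∑ k ∈ Icc (-(n:ℤ)) n, Q k, ?_, ?_⟩
  · rw [mortonF, hn, mul_sum]
    refine sum_congr rfl fun k _ => ?_
    rw [← hQ k]
    ring_nf
  · calc l1norm (∑ k ∈ Icc (-(n:ℤ)) n, Q k)
        ≤ ∑ k ∈ Icc (-(n:ℤ)) n, l1norm (Q k) := l1norm_sum_le _ _
      _ ≤ ∑ k ∈ Icc (-(n:ℤ)) n, (2 * q * (2 * n + 1) + 1 : ℤ) := by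
          refine sum_le_sum fun k hk => (hQnorm k).trans (abs_le.mpr ?_)
          obtain ⟨hk₁, hk₂⟩ := mem_Icc.mp hk
          constructor <;> nlinarith
      _ = _ := by
          rw [sum_const, Int.card_Icc, nsmul_eq_mul, show (n + 1 - -n : ℤ).toNat = 2 * n + 1 by omega]
          push_cast
          ring

/-- Morton's formula: `F_i(t)` is divisible by `t² − t^{−2}` in `ℤ[t,t^{−1}]`, and the
quotient `P_i` (the `i`-th colored Jones polynomial of the `(p,q)`-torus knot up to a
monomial) has `L¹`-norm at most `i(2qi+1)`. -/
theorem stmt18 (p q i : ℕ) (hp : 1 ≤ p) (hq : 1 ≤ q) (hi : 1 ≤ i) (hodd : Odd i) :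
    ∃ P : LaurentPolynomial ℤ,
      mortonF p q i = (T 2 - T (-2)) * P ∧ l1norm P ≤ i * (2*q*i + 1) :=
  stmt18_general p q i hodd
end
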